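/- arXiv:2108.04379 — 7 statements merged into one kernel-verified Lean document; each statement's English description precedes it below -/
import Mathlib

section
/- For every complex sequence (u_n)_{n≥0} with u_0 = 0, one has the discrete Hardy inequality: ∑_{n=1}^∞ |u_n|²/(4n²) ≤ ∑_{n=1}^∞ |u_n − u_{n−1}|² (where the left-hand side is +∞ only if the right-hand side is). -/
/-!
Elliott's proof. It suffices to treat the real sequence `A n = ‖u n‖`, since
`|‖u (n+1)‖ - ‖u n‖| ≤ ‖u (n+1) - u n‖`. With the averages `α n = A (n+1) / (n+1)` and the
increments `a n = A (n+1) - A n = (n+1) α n - n α (n-1)`, one has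
`α n ^ 2 - 2 a n α n = n α (n-1) ^ 2 - (n+1) α n ^ 2 - n (α n - α (n-1)) ^ 2`, which telescopes to
`∑ α n ^ 2 ≤ 2 ∑ a n α n`. Cauchy–Schwarz bounds the right-hand side by
`2 (∑ a n ^ 2)^½ (∑ α n ^ 2)^½`, whence `∑ α n ^ 2 ≤ 4 ∑ a n ^ 2` for all partial sums.
-/

open Finset

lemma sum_range_sq_div_succ_le_two_mul_sum (A : ℕ → ℝ) (h0 : A 0 = 0) (N : ℕ) :
    ∑ n ∈ range N, (A (n + 1) / (n + 1)) ^ 2 ≤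
      2 * ∑ n ∈ range N, (A (n + 1) - A n) * (A (n + 1) / (n + 1)) := by
  -- The telescoping potential is `A N ^ 2 / N = N α (N-1) ^ 2`; at `N = 0` it is `0 / 0 = 0`.
  suffices key : ∀ N : ℕ, ∑ n ∈ range N,
      ((A (n + 1) / (n + 1)) ^ 2 - 2 * ((A (n + 1) - A n) * (A (n + 1) / (n + 1)))) +
        A N ^ 2 / N ≤ 0 by
    have := key N
    rw [sum_sub_distrib, ← mul_sum] at this
    have : 0 ≤ A N ^ 2 / N := by positivity
    linarith
  intro N
  induction N with
  | zero => simp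
  | succ N ih =>
    set α := A (N + 1) / (N + 1)
    set β := A N / N
    have hα : A (N + 1) = (N + 1) * α := (mul_div_cancel₀ _ (by positivity)).symm
    have hβ : A N = N * β ∧ A N ^ 2 / N = N * β ^ 2 := by
      rcases N.eq_zero_or_pos with rfl | hN
      · simp [h0]
      · have hN' : (N : ℝ) ≠ 0 := by positivity
        exact ⟨(mul_div_cancel₀ _ hN').symm, by simp only [β]; field_simp⟩
    have step : α ^ 2 - 2 * ((A (N + 1) - A N) * α) + A (N + 1) ^ 2 / (N + 1) ≤ A N ^ 2 / N := by
      have hpot : ((N + 1) * α) ^ 2 / (N + 1) = (N + 1) * α ^ 2 := by field_simp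
      rw [hβ.2, hβ.1, hα, hpot]
      nlinarith [mul_nonneg N.cast_nonneg (sq_nonneg (α - β))]
    rw [sum_range_succ]
    push_cast
    linarith

lemma sum_range_sq_div_succ_le_four_mul_sum_sq (A : ℕ → ℝ) (h0 : A 0 = 0) (N : ℕ) :
    ∑ n ∈ range N, (A (n + 1) / (n + 1)) ^ 2 ≤ 4 * ∑ n ∈ range N, (A (n + 1) - A n) ^ 2 := by
  have hX : 0 ≤ ∑ n ∈ range N, (A (n + 1) / (n + 1)) ^ 2 := sum_nonneg fun _ _ => sq_nonneg _
  have hY : 0 ≤ ∑ n ∈ range N, (A (n + 1) - A n) ^ 2 := sum_nonneg fun _ _ => sq_nonneg _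
  have hXS := sum_range_sq_div_succ_le_two_mul_sum A h0 N
  have hCS := sum_mul_sq_le_sq_mul_sq (range N) (fun n => A (n + 1) - A n)
    (fun n => A (n + 1) / (n + 1))
  nlinarith

lemma ENNReal.tsum_ofReal_le_tsum_ofReal_of_sum_range_le {f g : ℕ → ℝ} (hf : ∀ n, 0 ≤ f n)
    (hg : ∀ n, 0 ≤ g n) (h : ∀ N, ∑ n ∈ range N, f n ≤ ∑ n ∈ range N, g n) :
    ∑' n, ENNReal.ofReal (f n) ≤ ∑' n, ENNReal.ofReal (g n) := by
  refine ENNReal.tsum_le_of_sum_range_le fun N => ?_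
  calc ∑ n ∈ range N, ENNReal.ofReal (f n)
      = ENNReal.ofReal (∑ n ∈ range N, f n) := (ENNReal.ofReal_sum_of_nonneg fun n _ => hf n).symm
    _ ≤ ENNReal.ofReal (∑ n ∈ range N, g n) := ENNReal.ofReal_le_ofReal (h N)
    _ = ∑ n ∈ range N, ENNReal.ofReal (g n) := ENNReal.ofReal_sum_of_nonneg fun n _ => hg n
    _ ≤ ∑' n, ENNReal.ofReal (g n) := ENNReal.sum_le_tsum _

/-- The classical discrete Hardy inequality: for every complex sequence `u` with `u 0 = 0`,
`∑_{n≥1} |u n|² / (4 n²) ≤ ∑_{n≥1} |u n - u (n-1)|²`, as an inequality in `[0, ∞]`. -/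
theorem discrete_hardy_inequality (u : ℕ → ℂ) (h0 : u 0 = 0) :
    ∑' n : ℕ, ENNReal.ofReal (‖u (n + 1)‖ ^ 2 / (4 * ((n : ℝ) + 1) ^ 2)) ≤
      ∑' n : ℕ, ENNReal.ofReal (‖u (n + 1) - u n‖ ^ 2) := by
  refine ENNReal.tsum_ofReal_le_tsum_ofReal_of_sum_range_le (fun _ => by positivity)
    (fun _ => by positivity) fun N => ?_
  have hardy := sum_range_sq_div_succ_le_four_mul_sum_sq (fun n => ‖u n‖) (by simp [h0]) N
  calc ∑ n ∈ range N, ‖u (n + 1)‖ ^ 2 / (4 * ((n : ℝ) + 1) ^ 2)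
      = (∑ n ∈ range N, (‖u (n + 1)‖ / (n + 1)) ^ 2) / 4 := by
        rw [sum_div]
        exact sum_congr rfl fun n _ => by field_simp
    _ ≤ ∑ n ∈ range N, (‖u (n + 1)‖ - ‖u n‖) ^ 2 := by linarith
    _ ≤ ∑ n ∈ range N, ‖u (n + 1) - u n‖ ^ 2 :=
        sum_le_sum fun n _ => sq_le_sq.2 ((abs_norm_sub_norm_le _ _).trans (le_abs_self _))
end

section
/- For every integer n ≥ 1, the weight w_n := 2 − √((n+1)/n) − √((n−1)/n) satisfies w_n > 1/(4n²). -/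
/-- For every integer `n ≥ 1`, the weight `w n = 2 - √((n+1)/n) - √((n-1)/n)` satisfies
`w n > 1 / (4 n²)`. -/
theorem weight_gt_classical (n : ℕ) (hn : 1 ≤ n) :
    (1 : ℝ) / (4 * (n : ℝ) ^ 2) <
      2 - Real.sqrt (((n : ℝ) + 1) / (n : ℝ)) - Real.sqrt (((n : ℝ) - 1) / (n : ℝ)) := by
  set x : ℝ := (n : ℝ) with hxdef
  have hx : (1 : ℝ) ≤ x := by rw [hxdef]; exact_mod_cast hn
  have hx0 : (0 : ℝ) < x := by linarith
  set a := Real.sqrt ((x + 1) / x) with ha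
  set b := Real.sqrt ((x - 1) / x) with hb
  have ha0 : 0 ≤ a := Real.sqrt_nonneg _
  have hb0 : 0 ≤ b := Real.sqrt_nonneg _
  have ha2 : a ^ 2 = (x + 1) / x := Real.sq_sqrt (by positivity)
  have hb2 : b ^ 2 = (x - 1) / x := Real.sq_sqrt (div_nonneg (by linarith) hx0.le)
  have hab : a * b = Real.sqrt ((x + 1) / x * ((x - 1) / x)) :=
    (Real.sqrt_mul (by positivity) _).symm
  have hable : a * b ≤ 1 - 1 / (2 * x ^ 2) := by
    rw [hab]
    have h1 : (x + 1) / x * ((x - 1) / x) ≤ (1 - 1 / (2 * x ^ 2)) ^ 2 := by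
      have hx2 : (0 : ℝ) < x ^ 2 := by positivity
      rw [div_mul_div_comm, div_le_iff₀ (by positivity)]
      have e : (1 - 1 / (2 * x ^ 2)) ^ 2 * (x * x) = x ^ 2 - 1 + 1 / (4 * x ^ 2) := by
        field_simp; ring
      have hp : (0 : ℝ) < 1 / (4 * x ^ 2) := by positivity
      nlinarith
    calc Real.sqrt ((x + 1) / x * ((x - 1) / x))
        ≤ Real.sqrt ((1 - 1 / (2 * x ^ 2)) ^ 2) := Real.sqrt_le_sqrt h1
      _ = 1 - 1 / (2 * x ^ 2) := Real.sqrt_sq (by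
            have : 1 / (2 * x ^ 2) ≤ 1 := by
              rw [div_le_one (by positivity)]; nlinarith
            linarith)
  have hsum : a + b < 2 - 1 / (4 * x ^ 2) := by
    have hpos : (0 : ℝ) < 2 - 1 / (4 * x ^ 2) := by
      have : 1 / (4 * x ^ 2) ≤ 1 / 4 := by
        apply div_le_div_of_nonneg_left (by norm_num) (by norm_num)
        nlinarith
      linarith
    refine lt_of_pow_lt_pow_left₀ 2 (le_of_lt hpos) ?_
    have hsq : (a + b) ^ 2 ≤ 4 - 1 / x ^ 2 := by
      have : (a + b) ^ 2 = a ^ 2 + b ^ 2 + 2 * (a * b) := by ring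
      rw [this, ha2, hb2]
      have h2 : (x + 1) / x + (x - 1) / x = 2 := by field_simp; ring
      rw [h2]
      have : 1 / (2 * x ^ 2) * 2 = 1 / x ^ 2 := by field_simp
      nlinarith
    have hrhs : (4 : ℝ) - 1 / x ^ 2 < (2 - 1 / (4 * x ^ 2)) ^ 2 := by
      have hx2 : (0 : ℝ) < x ^ 2 := by positivity
      have key : (2 - 1 / (4 * x ^ 2)) ^ 2 = 4 - 1 / x ^ 2 + 1 / (16 * x ^ 4) := by
        field_simp
        ring
      rw [key]
      have : (0 : ℝ) < 1 / (16 * x ^ 4) := by positivity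
      linarith
    linarith
  linarith
end

section
/- For every finitely supported complex sequence (u_n)_{n≥0} with u_0 = 0, the following identity holds: ∑_{n=1}^∞ w_n |u_n|² + ∑_{n=2}^∞ |((n−1)/n)^{1/4} u_n − (n/(n−1))^{1/4} u_{n−1}|² = ∑_{n=1}^∞ |u_n − u_{n−1}|², where w_n := 2 − √((n+1)/n) − √((n−1)/n). -/
/-!
Ground state representation. Expanding the squares, the `n`-th summand of the left side exceeds
the `n`-th summand of the right side by `φ (n + 1) - φ n`, where
`φ n = ‖u n‖² + c n ‖u (n + 1)‖² - 2 Re ⟪u (n + 1), u n⟫` and `c n = √(n / (n + 1))`; this only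
uses that the two coefficients of the second sum are reciprocal, the first with square `c (n + 1)`,
and that `c 0 = 0`. As `u 0 = 0` and `u` has finite support, `φ` vanishes at both ends of the
support and the increments telescope away.
-/

open Finset RCLike

open scoped InnerProductSpace

section InnerProductSpace

variable {𝕜 E : Type*} [RCLike 𝕜] [NormedAddCommGroup E] [InnerProductSpace 𝕜 E]

theorem norm_ofReal_smul_sub_ofReal_smul_sq {a b : ℝ} (hab : a * b = 1) (x y : E) :
    ‖(a : 𝕜) • x - (b : 𝕜) • y‖ ^ 2 = a ^ 2 * ‖x‖ ^ 2 + b ^ 2 * ‖y‖ ^ 2 - 2 * re ⟪x, y⟫_𝕜 := by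
  have hinner : ⟪(a : 𝕜) • x, (b : 𝕜) • y⟫_𝕜 = ⟪x, y⟫_𝕜 := by
    rw [inner_smul_left, inner_smul_right, conj_ofReal, ← mul_assoc, ← ofReal_mul, hab,
      ofReal_one, one_mul]
  rw [norm_sub_sq (𝕜 := 𝕜), hinner, norm_smul, norm_smul, norm_ofReal, norm_ofReal, mul_pow,
    mul_pow, sq_abs, sq_abs]
  ring

theorem tsum_add_tsum_eq_tsum_of_telescoping {f g h φ : ℕ → ℝ} {N : ℕ}
    (hf : ∀ n ≥ N, f n = 0) (hg : ∀ n ≥ N, g n = 0) (hh : ∀ n ≥ N, h n = 0)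
    (hφ0 : φ 0 = 0) (hφN : φ N = 0) (hfgh : ∀ n, f n + g n = h n + (φ (n + 1) - φ n)) :
    ∑' n, f n + ∑' n, g n = ∑' n, h n := by
  have htsum {F : ℕ → ℝ} (hF : ∀ n ≥ N, F n = 0) : ∑' n, F n = ∑ n ∈ range N, F n :=
    tsum_eq_sum fun n hn => hF n (by simpa using hn)
  rw [htsum hf, htsum hg, htsum hh, ← sum_add_distrib, sum_congr rfl fun n _ => hfgh n,
    sum_add_distrib, sum_range_sub, hφ0, hφN, sub_zero, add_zero]

theorem exists_forall_ge_eq_zero_of_finite_support {M : Type*} [Zero M] {u : ℕ → M}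
    (hu : (Function.support u).Finite) : ∃ N, ∀ n ≥ N, u n = 0 := by
  obtain ⟨N, hN⟩ := hu.bddAbove
  exact ⟨N + 1, fun n hn => Function.notMem_support.1 fun hn' => by have := hN hn'; omega⟩

theorem tsum_mul_norm_sq_add_tsum_norm_smul_sub_sq_eq_tsum_norm_sub_sq {c a b : ℕ → ℝ}
    (hc0 : c 0 = 0) (hab : ∀ n, a n * b n = 1) (ha : ∀ n, a n ^ 2 = c (n + 1))
    {u : ℕ → E} (h0 : u 0 = 0) (hu : (Function.support u).Finite) :
    ∑' n, (2 - b n ^ 2 - c n) * ‖u (n + 1)‖ ^ 2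
      + ∑' n, ‖(a n : 𝕜) • u (n + 2) - (b n : 𝕜) • u (n + 1)‖ ^ 2
      = ∑' n, ‖u (n + 1) - u n‖ ^ 2 := by
  obtain ⟨N, hN⟩ := exists_forall_ge_eq_zero_of_finite_support hu
  set φ : ℕ → ℝ := fun n => ‖u n‖ ^ 2 + c n * ‖u (n + 1)‖ ^ 2 - 2 * re ⟪u (n + 1), u n⟫_𝕜
  refine tsum_add_tsum_eq_tsum_of_telescoping (N := N) (φ := φ) ?_ ?_ ?_ ?_ ?_ fun n => ?_
  · intro n hn; simp [hN (n + 1) (by omega)]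
  · intro n hn; simp [hN (n + 1) (by omega), hN (n + 2) (by omega)]
  · intro n hn; simp [hN (n + 1) (by omega), hN n hn]
  · simp [φ, h0, hc0]
  · simp [φ, hN N le_rfl, hN (N + 1) (by omega)]
  · rw [norm_ofReal_smul_sub_ofReal_smul_sq (hab n), norm_sub_sq (𝕜 := 𝕜), ha]
    ring

end InnerProductSpace

theorem Real.rpow_one_div_four_sq {x : ℝ} (hx : 0 ≤ x) : (x ^ (1 / 4 : ℝ)) ^ 2 = √x := by
  rw [← Real.rpow_natCast, ← Real.rpow_mul hx, Real.sqrt_eq_rpow]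
  norm_num

/-- The identity behind the improved discrete Hardy inequality: for every finitely supported
complex sequence `u` with `u 0 = 0`,
`∑_{n≥1} w n |u n|² + ∑_{n≥2} |((n-1)/n)^{1/4} u n - (n/(n-1))^{1/4} u (n-1)|²
  = ∑_{n≥1} |u n - u (n-1)|²`
where `w n = 2 - √((n+1)/n) - √((n-1)/n)`. -/
theorem improved_discrete_hardy_identity (u : ℕ → ℂ) (h0 : u 0 = 0)
    (hsupp : (Function.support u).Finite) :
    (∑' n : ℕ, (2 - Real.sqrt (((n : ℝ) + 2) / ((n : ℝ) + 1))
        - Real.sqrt ((n : ℝ) / ((n : ℝ) + 1))) * ‖(u (n + 1))‖ ^ 2)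
    + (∑' n : ℕ, ‖
        (((((n : ℝ) + 1) / ((n : ℝ) + 2)) ^ ((1 : ℝ) / 4) : ℝ) * u (n + 2)
          - ((((n : ℝ) + 2) / ((n : ℝ) + 1)) ^ ((1 : ℝ) / 4) : ℝ) * u (n + 1))‖ ^ 2)
    = ∑' n : ℕ, ‖(u (n + 1) - u n)‖ ^ 2 := by
  have hab (n : ℕ) :
      (((n : ℝ) + 1) / (n + 2)) ^ (1 / 4 : ℝ) * (((n : ℝ) + 2) / (n + 1)) ^ (1 / 4 : ℝ) = 1 := by
    rw [← Real.mul_rpow (by positivity) (by positivity), div_mul_div_cancel₀', div_self,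
      Real.one_rpow] <;> positivity
  have ha (n : ℕ) : ((((n : ℝ) + 1) / (n + 2)) ^ (1 / 4 : ℝ)) ^ 2
      = √(((n + 1 : ℕ) : ℝ) / ((n + 1 : ℕ) + 1)) := by
    rw [Real.rpow_one_div_four_sq (by positivity)]
    push_cast
    ring_nf
  have hb (n : ℕ) : ((((n : ℝ) + 2) / (n + 1)) ^ (1 / 4 : ℝ)) ^ 2 = √(((n : ℝ) + 2) / (n + 1)) :=
    Real.rpow_one_div_four_sq (by positivity)
  have := tsum_mul_norm_sq_add_tsum_norm_smul_sub_sq_eq_tsum_norm_sub_sq (𝕜 := ℂ)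
    (c := fun n => √((n : ℝ) / (n + 1))) (by simp) hab ha h0 hsupp
  simp only [hb] at this
  -- `((r : ℝ) : ℂ) • z` unfolds to `(r : ℂ) * z`
  exact this
end

section
/- The weight w_n := 2 − √((n+1)/n) − √((n−1)/n) is optimal in the improved discrete Hardy inequality: if w̃ : ℕ → ℝ is a sequence with w̃_n ≥ w_n for all n ≥ 1 and ∑_{n=1}^∞ w̃_n |u_n|² ≤ ∑_{n=1}^∞ |u_n − u_{n−1}|² holds for every finitely supported complex sequence u with u_0 = 0, then w̃_n = w_n for all n ≥ 1. -/
/-!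
The sequence `√n` is a generalized ground state of `w`: writing `v n = √n * ψ n`, the form
`∑ (v (n+1) - v n)² - ∑ w (n+1) v (n+1)²` equals `∑ √n √(n+1) (ψ (n+1) - ψ n)²` plus a boundary
term that vanishes once `ψ` does. Since `√n ∉ ℓ²` this energy can be made arbitrarily small with
`ψ = 1` at a given `N`: the logarithmic cutoff `ψ n = 1 - (H n - H N) / T`, clamped to `[0, 1]`
(`H` the harmonic numbers), has energy at most `1 / T`. A gain `w̃ N - w N > 0` would then force
`(w̃ N - w N) N ≤ 1 / T` for every `T > 0`.
-/

open Finset Real Filter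

namespace HardyOptimality

noncomputable def hardyWeight (n : ℕ) : ℝ :=
  2 - √(((n : ℝ) + 1) / n) - √(((n : ℝ) - 1) / n)

lemma hardyWeight_succ (n : ℕ) :
    hardyWeight (n + 1)
      = 2 - √((n : ℝ) + 2) / √((n : ℝ) + 1) - √(n : ℝ) / √((n : ℝ) + 1) := by
  rw [hardyWeight, sqrt_div (by positivity), sqrt_div (by simp)]
  push_cast
  ring_nf

lemma sq_sub_sub_weight_mul_sq {a b c : ℝ} (hb : b ≠ 0) (p q : ℝ) :
    (b * q - a * p) ^ 2 - (2 - c / b - a / b) * (b * q) ^ 2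
      = a * b * (q - p) ^ 2 + (b * c - b ^ 2) * q ^ 2 - (a * b - a ^ 2) * p ^ 2 := by
  field_simp
  ring

theorem sum_sq_sub_hardyWeight_mul_sq (ψ : ℕ → ℝ) (M : ℕ) :
    ∑ n ∈ range M, ((√((n + 1 : ℕ) : ℝ) * ψ (n + 1) - √(n : ℝ) * ψ n) ^ 2
        - hardyWeight (n + 1) * (√((n + 1 : ℕ) : ℝ) * ψ (n + 1)) ^ 2)
      = ∑ n ∈ range M, √(n : ℝ) * √((n : ℝ) + 1) * (ψ (n + 1) - ψ n) ^ 2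
        + (√(M : ℝ) * √((M : ℝ) + 1) - M) * ψ M ^ 2 := by
  induction M with
  | zero => simp
  | succ M ih =>
    rw [sum_range_succ, sum_range_succ, ih, hardyWeight_succ]
    push_cast
    rw [show (M : ℝ) + 1 + 1 = M + 2 by ring,
      sq_sub_sub_weight_mul_sq (b := √((M : ℝ) + 1)) (by positivity)]
    have hM : √(M : ℝ) ^ 2 = M := sq_sqrt (by positivity)
    have hM1 : √((M : ℝ) + 1) ^ 2 = M + 1 := sq_sqrt (by positivity)
    linear_combination ψ M ^ 2 * hM - ψ (M + 1) ^ 2 * hM1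

theorem sum_sqrt_mul_sq_sub_le {ψ : ℕ → ℝ} (hψ : Antitone ψ) {c : ℝ}
    (hstep : ∀ n : ℕ, ((n : ℝ) + 1) * (ψ n - ψ (n + 1)) ≤ c) (M : ℕ) :
    ∑ n ∈ range M, √(n : ℝ) * √((n : ℝ) + 1) * (ψ (n + 1) - ψ n) ^ 2 ≤ c * (ψ 0 - ψ M) := by
  rw [← sum_range_sub', mul_sum]
  refine sum_le_sum fun n _ => ?_
  have hd : 0 ≤ ψ n - ψ (n + 1) := sub_nonneg.2 (hψ n.le_succ)
  have hsqrt : √(n : ℝ) * √((n : ℝ) + 1) ≤ (n : ℝ) + 1 :=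
    calc √(n : ℝ) * √((n : ℝ) + 1) ≤ √((n : ℝ) + 1) * √((n : ℝ) + 1) := by
          gcongr; linarith
      _ = (n : ℝ) + 1 := mul_self_sqrt (by positivity)
  calc √(n : ℝ) * √((n : ℝ) + 1) * (ψ (n + 1) - ψ n) ^ 2
      = √(n : ℝ) * √((n : ℝ) + 1) * (ψ n - ψ (n + 1)) ^ 2 := by ring
    _ ≤ ((n : ℝ) + 1) * (ψ n - ψ (n + 1)) ^ 2 := by gcongr
    _ = ((n : ℝ) + 1) * (ψ n - ψ (n + 1)) * (ψ n - ψ (n + 1)) := by ring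
    _ ≤ c * (ψ n - ψ (n + 1)) := by gcongr; exact hstep n

lemma monotone_harmonic_real : Monotone fun n : ℕ => (harmonic n : ℝ) :=
  monotone_nat_of_le_succ fun n => by
    rw [harmonic_succ, Rat.cast_add]
    exact le_add_of_nonneg_right (by positivity)

lemma tendsto_harmonic_real_atTop : Tendsto (fun n : ℕ => (harmonic n : ℝ)) atTop atTop :=
  tendsto_atTop_mono log_add_one_le_harmonic <|
    tendsto_log_atTop.comp <| tendsto_natCast_atTop_atTop.comp <| tendsto_add_atTop_nat 1

noncomputable def logCutoff (N : ℕ) (T : ℝ) (n : ℕ) : ℝ :=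
  Set.projIcc 0 1 zero_le_one (1 - ((harmonic n : ℝ) - harmonic N) / T)

section logCutoff

variable {N : ℕ} {T : ℝ}

lemma logCutoff_mem_Icc (n : ℕ) : logCutoff N T n ∈ Set.Icc 0 1 :=
  (Set.projIcc 0 1 zero_le_one _).2

lemma logCutoff_self : logCutoff N T N = 1 := by
  simp [logCutoff]

lemma antitone_logCutoff (hT : 0 ≤ T) : Antitone (logCutoff N T) := fun _ _ hmn =>
  Set.monotone_projIcc zero_le_one <|
    sub_le_sub_left (div_le_div_of_nonneg_right
      (sub_le_sub_right (monotone_harmonic_real hmn) _) hT) 1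

lemma logCutoff_eq_zero (hT : 0 < T) {n : ℕ} (hn : (harmonic N : ℝ) + T ≤ harmonic n) :
    logCutoff N T n = 0 := by
  rw [logCutoff, Set.projIcc_of_le_left]
  rw [sub_nonpos, le_div_iff₀ hT]
  linarith

lemma succ_mul_logCutoff_sub_le (hT : 0 < T) (n : ℕ) :
    ((n : ℝ) + 1) * (logCutoff N T n - logCutoff N T (n + 1)) ≤ T⁻¹ := by
  have hstep : logCutoff N T n - logCutoff N T (n + 1) ≤ ((n + 1) * T)⁻¹ :=
    calc logCutoff N T n - logCutoff N T (n + 1)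
        ≤ |logCutoff N T n - logCutoff N T (n + 1)| := le_abs_self _
      _ ≤ |_ - _| := Set.abs_projIcc_sub_projIcc zero_le_one
      _ = ((n + 1) * T)⁻¹ := by
          rw [harmonic_succ, ← abs_of_pos (by positivity : 0 < ((n + 1 : ℝ) * T)⁻¹)]
          push_cast
          field_simp
          ring_nf
  calc ((n : ℝ) + 1) * (logCutoff N T n - logCutoff N T (n + 1))
      ≤ ((n : ℝ) + 1) * ((n + 1) * T)⁻¹ := by gcongr
    _ = T⁻¹ := by field_simp

end logCutoff

lemma sum_range_le_of_hardy {w : ℕ → ℝ}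
    (hin : ∀ u : ℕ → ℂ, u 0 = 0 → (Function.support u).Finite →
      ∑' n : ℕ, w (n + 1) * ‖u (n + 1)‖ ^ 2 ≤ ∑' n : ℕ, ‖u (n + 1) - u n‖ ^ 2)
    {v : ℕ → ℝ} (hv0 : v 0 = 0) {M : ℕ} (hvM : ∀ n, M ≤ n → v n = 0) :
    ∑ n ∈ range M, w (n + 1) * v (n + 1) ^ 2 ≤ ∑ n ∈ range M, (v (n + 1) - v n) ^ 2 := by
  have hsupp : (Function.support fun n => (v n : ℂ)).Finite :=
    (Set.finite_Iio M).subset fun n hn => by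
      by_contra h
      exact hn (by simp [hvM n (not_lt.1 h)])
  have h := hin (fun n => (v n : ℂ)) (by simp [hv0]) hsupp
  simp only [← Complex.ofReal_sub, Complex.norm_real, norm_eq_abs, sq_abs] at h
  rwa [tsum_eq_sum (s := range M), tsum_eq_sum (s := range M)] at h
  all_goals
    intro n hn
    have hMn : M ≤ n := not_lt.1 (mem_range.not.1 hn)
    simp [hvM n hMn, hvM (n + 1) (by omega)]

theorem gap_mul_le_of_hardy {w : ℕ → ℝ} (hge : ∀ n : ℕ, 1 ≤ n → hardyWeight n ≤ w n)
    (hin : ∀ u : ℕ → ℂ, u 0 = 0 → (Function.support u).Finite →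
      ∑' n : ℕ, w (n + 1) * ‖u (n + 1)‖ ^ 2 ≤ ∑' n : ℕ, ‖u (n + 1) - u n‖ ^ 2)
    {N : ℕ} (hN : 1 ≤ N) {T : ℝ} (hT : 0 < T) :
    (w N - hardyWeight N) * N ≤ T⁻¹ := by
  obtain ⟨M, hNM, hM⟩ := ((eventually_ge_atTop N).and
    (tendsto_harmonic_real_atTop.eventually_ge_atTop ((harmonic N : ℝ) + T))).exists
  set ψ := logCutoff N T
  set v : ℕ → ℝ := fun n => √(n : ℝ) * ψ n
  have hψM : ψ M = 0 := logCutoff_eq_zero hT hM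
  have hvM : ∀ n, M ≤ n → v n = 0 := fun n hn => by
    simp [v, ψ, logCutoff_eq_zero hT (hM.trans (monotone_harmonic_real hn))]
  have hgain : (w N - hardyWeight N) * N
      ≤ ∑ n ∈ range M, (w (n + 1) - hardyWeight (n + 1)) * v (n + 1) ^ 2 := by
    have hvN : v N ^ 2 = N := by simp [v, ψ, logCutoff_self]
    obtain ⟨k, rfl⟩ := Nat.exists_eq_add_of_le' hN
    rw [← hvN]
    refine single_le_sum (f := fun n => (w (n + 1) - hardyWeight (n + 1)) * v (n + 1) ^ 2)
      (fun n _ => mul_nonneg (sub_nonneg.2 (hge _ n.succ_pos)) (sq_nonneg _))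
      (mem_range.2 (by omega))
  have hground := sum_sq_sub_hardyWeight_mul_sq ψ M
  rw [hψM, zero_pow two_ne_zero, mul_zero, add_zero] at hground
  calc (w N - hardyWeight N) * N
      ≤ ∑ n ∈ range M, (w (n + 1) - hardyWeight (n + 1)) * v (n + 1) ^ 2 := hgain
    _ ≤ ∑ n ∈ range M, ((v (n + 1) - v n) ^ 2 - hardyWeight (n + 1) * v (n + 1) ^ 2) := by
        simp only [sub_mul, sum_sub_distrib]
        exact sub_le_sub_right (sum_range_le_of_hardy hin (by simp [v]) hvM) _
    _ = ∑ n ∈ range M, √(n : ℝ) * √((n : ℝ) + 1) * (ψ (n + 1) - ψ n) ^ 2 := hground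
    _ ≤ T⁻¹ * (ψ 0 - ψ M) :=
        sum_sqrt_mul_sq_sub_le (antitone_logCutoff hT.le) (succ_mul_logCutoff_sub_le hT) M
    _ ≤ T⁻¹ := by
        rw [hψM, sub_zero]
        exact mul_le_of_le_one_right (by positivity) (logCutoff_mem_Icc 0).2

end HardyOptimality

open HardyOptimality in
/-- Optimality of the weight `w n = 2 - √((n+1)/n) - √((n-1)/n)` in the improved discrete Hardy
inequality: if `wtilde n ≥ w n` for all `n ≥ 1` and the Hardy inequality with weight `wtilde` holds for
all finitely supported complex sequences vanishing at `0`, then `wtilde n = w n` for all `n ≥ 1`. -/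
theorem improved_discrete_hardy_optimal (wtilde : ℕ → ℝ)
    (hge : ∀ n : ℕ, 1 ≤ n →
      2 - Real.sqrt (((n : ℝ) + 1) / (n : ℝ)) - Real.sqrt (((n : ℝ) - 1) / (n : ℝ)) ≤ wtilde n)
    (hin : ∀ u : ℕ → ℂ, u 0 = 0 → (Function.support u).Finite →
      ∑' n : ℕ, wtilde (n + 1) * ‖u (n + 1)‖ ^ 2 ≤
        ∑' n : ℕ, ‖u (n + 1) - u n‖ ^ 2) :
    ∀ n : ℕ, 1 ≤ n →
      wtilde n = 2 - Real.sqrt (((n : ℝ) + 1) / (n : ℝ)) - Real.sqrt (((n : ℝ) - 1) / (n : ℝ)) := by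
  intro N hN
  refine le_antisymm ?_ (hge N hN)
  have hgap : (wtilde N - hardyWeight N) * N ≤ 0 :=
    le_of_forall_pos_le_add fun ε hε => by
      simpa using gap_mul_le_of_hardy hge hin hN (inv_pos.2 hε)
  exact sub_nonpos.1 (nonpos_of_mul_nonpos_left hgap (by exact_mod_cast hN))
end

section
/- For every integer n ≥ 2 and all complex numbers a, b, with h_n := √n − √(n−1), the following identity holds: |√(1 − h_n/√n) · a − √(1 + h_n/√(n−1)) · b|² + h_n (|a|²/√n − |b|²/√(n−1)) = |a − b|². -/
/-!
Write `s = √n` and `t = √(n-1)`, so `h = s - t`, `1 - h/s = t/s` and `1 + h/t = s/t`.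
The two scalars `√(t/s)` and `√(s/t)` are reciprocal, so expanding the first square produces the
same cross term `-2 Re(a b̄)` as `|a - b|²`; the diagonal terms differ from `|a|² + |b|²` by
`(t/s - 1)|a|² + (s/t - 1)|b|²`, which the correction `h (|a|²/s - |b|²/t)` cancels exactly.
-/

open Real RealInnerProductSpace

section InnerProductSpace

variable {F : Type*} [NormedAddCommGroup F] [InnerProductSpace ℝ F]

theorem norm_smul_sub_smul_sq_of_mul_eq_one {c d : ℝ} (hcd : c * d = 1) (a b : F) :
    ‖c • a - d • b‖ ^ 2 = c ^ 2 * ‖a‖ ^ 2 - 2 * ⟪a, b⟫ + d ^ 2 * ‖b‖ ^ 2 := by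
  rw [norm_sub_sq_real, norm_smul, norm_smul, real_inner_smul_left, real_inner_smul_right,
    mul_pow, mul_pow, norm_eq_abs, norm_eq_abs, sq_abs, sq_abs]
  linear_combination (-2 * ⟪a, b⟫) * hcd

theorem norm_sqrt_div_smul_sub_sq_add {x y : ℝ} (hx : 0 < x) (hy : 0 < y) (a b : F) :
    ‖√(y / x) • a - √(x / y) • b‖ ^ 2 + (x - y) * (‖a‖ ^ 2 / x - ‖b‖ ^ 2 / y)
      = ‖a - b‖ ^ 2 := by
  have hyx : 0 ≤ y / x := by positivity
  have hxy : 0 ≤ x / y := by positivity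
  have hmul : √(y / x) * √(x / y) = 1 := by
    rw [← sqrt_mul hyx, div_mul_div_cancel₀ hx.ne', div_self hy.ne', sqrt_one]
  rw [norm_smul_sub_smul_sq_of_mul_eq_one hmul, sq_sqrt hyx, sq_sqrt hxy, norm_sub_sq_real]
  field_simp
  ring

end InnerProductSpace

/-- The key pointwise identity: for every integer `n ≥ 2` and all complex `a`, `b`, with
`h = √n - √(n-1)`,
`|√(1 - h/√n) a - √(1 + h/√(n-1)) b|² + h (|a|²/√n - |b|²/√(n-1)) = |a - b|²`. -/
theorem key_identity (n : ℕ) (hn : 2 ≤ n) (a b : ℂ) :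
    ‖((Real.sqrt (1 - (Real.sqrt (n : ℝ) - Real.sqrt ((n : ℝ) - 1)) / Real.sqrt (n : ℝ)) : ℂ)
            * a
          - (Real.sqrt (1 + (Real.sqrt (n : ℝ) - Real.sqrt ((n : ℝ) - 1))
              / Real.sqrt ((n : ℝ) - 1)) : ℂ) * b)‖ ^ 2
      + (Real.sqrt (n : ℝ) - Real.sqrt ((n : ℝ) - 1))
        * (‖a‖ ^ 2 / Real.sqrt (n : ℝ) - ‖b‖ ^ 2 / Real.sqrt ((n : ℝ) - 1))
      = ‖a - b‖ ^ 2 := by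
  have hn' : (2 : ℝ) ≤ n := by exact_mod_cast hn
  have hs : 0 < √(n : ℝ) := sqrt_pos.2 (by linarith)
  have ht : 0 < √((n : ℝ) - 1) := sqrt_pos.2 (by linarith)
  have hleft : 1 - (√(n : ℝ) - √((n : ℝ) - 1)) / √(n : ℝ) = √((n : ℝ) - 1) / √(n : ℝ) := by
    field_simp; ring
  have hright : 1 + (√(n : ℝ) - √((n : ℝ) - 1)) / √((n : ℝ) - 1)
      = √(n : ℝ) / √((n : ℝ) - 1) := by
    field_simp; ring
  rw [hleft, hright, ← Complex.real_smul, ← Complex.real_smul]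
  exact norm_sqrt_div_smul_sub_sq_add hs ht a b
end

section
/- If a nonnegative weight sequence (w̃_n)_{n≥1} satisfies ∑_{n=1}^∞ w̃_n |u_n|² ≤ ∑_{n=1}^∞ |u_n − u_{n−1}|² for every finitely supported complex sequence u with u_0 = 0, and w̃_n ≥ w_n for all n ≥ 1, then for every finitely supported complex sequence u with u_0 = 0 one has 0 ≤ ∑_{n=1}^∞ (w̃_n − w_n)|u_n|² ≤ ∑_{n=2}^∞ |((n−1)/n)^{1/4} u_n − (n/(n−1))^{1/4} u_{n−1}|², where w_n := 2 − √((n+1)/n) − √((n−1)/n). -/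
/-!
With `α = ((n - 1) / n) ^ (1 / 4)` and `β = α⁻¹`, expanding the squares gives
`|a - b|² = |α a - β b|² + (1 - α²)|a|² + (1 - β²)|b|²` for `a = u n`, `b = u (n - 1)`.
Summed over `n`, the terms `(1 - √((n - 1) / n))|u n|²` telescope, which is the ground state
representation `∑ |u n - u (n - 1)|² = ∑ w n |u n|² + ∑ |α u n - β u (n - 1)|²`. Subtracting it
from the assumed inequality for `w̃` bounds `∑ (w̃ n - w n)|u n|²` by the remainder.
-/

open Finset Function

theorem norm_sub_sq_eq_norm_smul_sub_smul_sq_add {E : Type*} [NormedAddCommGroup E]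
    [InnerProductSpace ℝ E] (a b : E) {α β : ℝ} (h : α * β = 1) :
    ‖a - b‖ ^ 2 = ‖α • a - β • b‖ ^ 2 + (1 - α ^ 2) * ‖a‖ ^ 2 + (1 - β ^ 2) * ‖b‖ ^ 2 := by
  rw [norm_sub_sq_real, norm_sub_sq_real, norm_smul, norm_smul, inner_smul_left,
    inner_smul_right, Real.norm_eq_abs, Real.norm_eq_abs, mul_pow, mul_pow, sq_abs, sq_abs]
  simp only [conj_trivial]
  linear_combination (2 * inner ℝ a b) * h

theorem Real.rpow_one_div_four_sq_s9 {q : ℝ} (hq : 0 ≤ q) : (q ^ ((1 : ℝ) / 4)) ^ 2 = √q := by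
  rw [← Real.rpow_natCast, ← Real.rpow_mul hq, Real.sqrt_eq_rpow]
  norm_num

theorem tsum_eq_sum_range_of_forall_ge {M : Type*} [AddCommMonoid M] [TopologicalSpace M]
    {f : ℕ → M} {N : ℕ} (h : ∀ n, N ≤ n → f n = 0) :
    ∑' n, f n = ∑ n ∈ range N, f n :=
  tsum_eq_sum fun n hn => h n (by simpa using hn)

noncomputable def hardyWeight (n : ℕ) : ℝ := 2 - √(((n : ℝ) + 1) / n) - √(((n : ℝ) - 1) / n)

theorem hardyWeight_succ (n : ℕ) :
    hardyWeight (n + 1) = 2 - √(((n : ℝ) + 2) / ((n : ℝ) + 1)) - √((n : ℝ) / ((n : ℝ) + 1)) := by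
  simp only [hardyWeight]
  push_cast
  ring_nf

/-- The term of index `n + 2` of the remainder in the statement. -/
noncomputable def hardyRemainder (u : ℕ → ℂ) (n : ℕ) : ℂ :=
  ((((n : ℝ) + 1) / ((n : ℝ) + 2)) ^ ((1 : ℝ) / 4) : ℝ) * u (n + 2)
    - ((((n : ℝ) + 2) / ((n : ℝ) + 1)) ^ ((1 : ℝ) / 4) : ℝ) * u (n + 1)

theorem norm_sub_sq_add_eq_hardyWeight_add (u : ℕ → ℂ) (n : ℕ) :
    ‖u (n + 2) - u (n + 1)‖ ^ 2 + (1 - √((n : ℝ) / ((n : ℝ) + 1))) * ‖u (n + 1)‖ ^ 2 =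
      hardyWeight (n + 1) * ‖u (n + 1)‖ ^ 2 + ‖hardyRemainder u n‖ ^ 2
        + (1 - √(((n : ℝ) + 1) / ((n : ℝ) + 2))) * ‖u (n + 2)‖ ^ 2 := by
  have hα : (0 : ℝ) ≤ ((n : ℝ) + 1) / ((n : ℝ) + 2) := by positivity
  have hβ : (0 : ℝ) ≤ ((n : ℝ) + 2) / ((n : ℝ) + 1) := by positivity
  have hαβ : (((n : ℝ) + 1) / ((n : ℝ) + 2)) ^ ((1 : ℝ) / 4)
      * (((n : ℝ) + 2) / ((n : ℝ) + 1)) ^ ((1 : ℝ) / 4) = 1 := by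
    rw [← Real.mul_rpow hα hβ, div_mul_div_comm, mul_comm ((n : ℝ) + 1), div_self (by positivity),
      Real.one_rpow]
  have key := norm_sub_sq_eq_norm_smul_sub_smul_sq_add (u (n + 2)) (u (n + 1)) hαβ
  rw [Real.rpow_one_div_four_sq_s9 hα, Real.rpow_one_div_four_sq_s9 hβ] at key
  simp only [Complex.real_smul] at key
  rw [hardyWeight_succ, hardyRemainder, key]
  ring

theorem sum_range_succ_norm_sub_sq_eq (u : ℕ → ℂ) (hu0 : u 0 = 0) (N : ℕ) :
    ∑ n ∈ range (N + 1), ‖u (n + 1) - u n‖ ^ 2 =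
      ∑ n ∈ range N, (hardyWeight (n + 1) * ‖u (n + 1)‖ ^ 2 + ‖hardyRemainder u n‖ ^ 2)
        + (1 - √((N : ℝ) / ((N : ℝ) + 1))) * ‖u (N + 1)‖ ^ 2 := by
  induction N with
  | zero => simp [hu0]
  | succ N ih =>
    rw [sum_range_succ, ih, sum_range_succ]
    have step := norm_sub_sq_add_eq_hardyWeight_add u N
    push_cast
    rw [show (N : ℝ) + 1 + 1 = N + 2 by ring]
    linarith

theorem exists_forall_lt_eq_zero_of_finite_support {M : Type*} [Zero M] {u : ℕ → M}
    (hfin : (support u).Finite) :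
    ∃ N, ∀ m, N < m → u m = 0 := by
  obtain ⟨N, hN⟩ := hfin.bddAbove
  exact ⟨N, fun m hm => notMem_support.1 fun h => (hN h).not_gt hm⟩

theorem tsum_norm_sub_sq_eq (u : ℕ → ℂ) (hu0 : u 0 = 0) (hfin : (support u).Finite) :
    ∑' n, ‖u (n + 1) - u n‖ ^ 2 =
      ∑' n, hardyWeight (n + 1) * ‖u (n + 1)‖ ^ 2 + ∑' n, ‖hardyRemainder u n‖ ^ 2 := by
  obtain ⟨N, hN⟩ := exists_forall_lt_eq_zero_of_finite_support hfin
  rw [tsum_eq_sum_range_of_forall_ge (N := N + 1) fun n hn => by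
      simp [hN n hn, hN (n + 1) (by omega)],
    tsum_eq_sum_range_of_forall_ge (N := N) fun n hn => by simp [hN (n + 1) (by omega)],
    tsum_eq_sum_range_of_forall_ge (N := N) fun n hn => by
      simp [hardyRemainder, hN (n + 1) (by omega), hN (n + 2) (by omega)],
    sum_range_succ_norm_sub_sq_eq u hu0, hN (N + 1) (by omega), sum_add_distrib]
  simp

theorem summable_mul_norm_sq_succ (g : ℕ → ℝ) {u : ℕ → ℂ} (hfin : (support u).Finite) :
    Summable fun n => g n * ‖u (n + 1)‖ ^ 2 :=
  summable_of_hasFiniteSupport <| (hfin.preimage (add_left_injective 1).injOn).subset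
    fun n hn h => hn (by simp [show u (n + 1) = 0 from h])

theorem towards_optimality_general (wtilde : ℕ → ℝ)
    (hge : ∀ n : ℕ, 1 ≤ n →
      2 - Real.sqrt (((n : ℝ) + 1) / (n : ℝ)) - Real.sqrt (((n : ℝ) - 1) / (n : ℝ)) ≤ wtilde n)
    (hin : ∀ u : ℕ → ℂ, u 0 = 0 → (Function.support u).Finite →
      ∑' n : ℕ, wtilde (n + 1) * ‖u (n + 1)‖ ^ 2 ≤
        ∑' n : ℕ, ‖u (n + 1) - u n‖ ^ 2) :
    ∀ u : ℕ → ℂ, u 0 = 0 → (Function.support u).Finite →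
      0 ≤ ∑' n : ℕ, (wtilde (n + 1) - (2 - Real.sqrt (((n : ℝ) + 2) / ((n : ℝ) + 1))
            - Real.sqrt ((n : ℝ) / ((n : ℝ) + 1)))) * ‖u (n + 1)‖ ^ 2
      ∧ ∑' n : ℕ, (wtilde (n + 1) - (2 - Real.sqrt (((n : ℝ) + 2) / ((n : ℝ) + 1))
            - Real.sqrt ((n : ℝ) / ((n : ℝ) + 1)))) * ‖u (n + 1)‖ ^ 2 ≤
          ∑' n : ℕ,
            ‖((((n : ℝ) + 1) / ((n : ℝ) + 2)) ^ ((1 : ℝ) / 4) : ℝ) * u (n + 2)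
              - ((((n : ℝ) + 2) / ((n : ℝ) + 1)) ^ ((1 : ℝ) / 4) : ℝ) * u (n + 1)‖ ^ 2 := by
  intro u hu0 hfin
  simp only [← hardyWeight_succ]
  change _ ∧ _ ≤ ∑' n, ‖hardyRemainder u n‖ ^ 2
  have hw (n : ℕ) : hardyWeight (n + 1) ≤ wtilde (n + 1) := hge (n + 1) n.succ_pos
  refine ⟨tsum_nonneg fun n => mul_nonneg (sub_nonneg.2 (hw n)) (sq_nonneg _), ?_⟩
  simp only [sub_mul]
  rw [Summable.tsum_sub (summable_mul_norm_sq_succ _ hfin) (summable_mul_norm_sq_succ _ hfin)]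
  linarith [hin u hu0 hfin, tsum_norm_sub_sq_eq u hu0 hfin]

/-- Towards optimality: if a nonnegative weight `wtilde` with `wtilde n ≥ w n` for `n ≥ 1` satisfies the
Hardy inequality for all finitely supported complex sequences vanishing at `0`, then for every
such sequence `u`,
`0 ≤ ∑_{n≥1} (wtilde n - w n)|u n|² ≤ ∑_{n≥2} |((n-1)/n)^{1/4} u n - (n/(n-1))^{1/4} u (n-1)|²`,
where `w n = 2 - √((n+1)/n) - √((n-1)/n)`. -/
theorem towards_optimality (wtilde : ℕ → ℝ)
    (hpos : ∀ n : ℕ, 1 ≤ n → 0 ≤ wtilde n)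
    (hge : ∀ n : ℕ, 1 ≤ n →
      2 - Real.sqrt (((n : ℝ) + 1) / (n : ℝ)) - Real.sqrt (((n : ℝ) - 1) / (n : ℝ)) ≤ wtilde n)
    (hin : ∀ u : ℕ → ℂ, u 0 = 0 → (Function.support u).Finite →
      ∑' n : ℕ, wtilde (n + 1) * ‖u (n + 1)‖ ^ 2 ≤
        ∑' n : ℕ, ‖u (n + 1) - u n‖ ^ 2) :
    ∀ u : ℕ → ℂ, u 0 = 0 → (Function.support u).Finite →
      0 ≤ ∑' n : ℕ, (wtilde (n + 1) - (2 - Real.sqrt (((n : ℝ) + 2) / ((n : ℝ) + 1))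
            - Real.sqrt ((n : ℝ) / ((n : ℝ) + 1)))) * ‖u (n + 1)‖ ^ 2
      ∧ ∑' n : ℕ, (wtilde (n + 1) - (2 - Real.sqrt (((n : ℝ) + 2) / ((n : ℝ) + 1))
            - Real.sqrt ((n : ℝ) / ((n : ℝ) + 1)))) * ‖u (n + 1)‖ ^ 2 ≤
          ∑' n : ℕ,
            ‖((((n : ℝ) + 1) / ((n : ℝ) + 2)) ^ ((1 : ℝ) / 4) : ℝ) * u (n + 2)
              - ((((n : ℝ) + 2) / ((n : ℝ) + 1)) ^ ((1 : ℝ) / 4) : ℝ) * u (n + 1)‖ ^ 2 :=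
  towards_optimality_general wtilde hge hin
end

section
/- If a sequence w̃ : ℕ → ℝ satisfies w̃_n ≥ w_n for all n ≥ 1, where w_n := 2 − √((n+1)/n) − √((n−1)/n), and ∑_{n=1}^∞ w̃_n |u_n|² ≤ ∑_{n=1}^∞ |u_n − u_{n−1}|² holds for every finitely supported complex sequence u with u_0 = 0, then ∑_{n=1}^∞ n (w̃_n − w_n) = 0. -/
/-!
Substituting `u n = √n * φ n` (the ground state representation: `√n` is the ground state of the
weight `w`) turns the Hardy inequality with weight `w̃` into
`∑ n (w̃ n - w n) (φ n)² ≤ ∑ √(n (n + 1)) (φ (n + 1) - φ n)²`.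
The left-hand side has nonnegative terms, while the right-hand side can be made arbitrarily small
with `φ = 1` on a prescribed initial segment, using a harmonic cutoff of energy `1 / (H_M - H_N)`.
Hence every `n (w̃ n - w n)` vanishes.
-/

open Finset Filter

noncomputable def optimalHardyWeight (n : ℕ) : ℝ :=
  2 - √(((n : ℝ) + 1) / n) - √(((n : ℝ) - 1) / n)

def IsHardyWeight (W : ℕ → ℝ) : Prop :=
  ∀ u : ℕ → ℂ, u 0 = 0 → (Function.support u).Finite →
    ∑' n : ℕ, W (n + 1) * ‖u (n + 1)‖ ^ 2 ≤ ∑' n : ℕ, ‖u (n + 1) - u n‖ ^ 2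

lemma optimalHardyWeight_succ (n : ℕ) :
    optimalHardyWeight (n + 1) =
      2 - √(((n : ℝ) + 2) / ((n : ℝ) + 1)) - √((n : ℝ) / ((n : ℝ) + 1)) := by
  unfold optimalHardyWeight
  push_cast
  ring_nf

lemma succ_mul_optimalHardyWeight_succ (n : ℕ) :
    ((n : ℝ) + 1) * optimalHardyWeight (n + 1) =
      √((n : ℝ) + 1) * (2 * √((n : ℝ) + 1) - √((n : ℝ) + 2) - √(n : ℝ)) := by
  rw [optimalHardyWeight_succ, Real.sqrt_div (by positivity), Real.sqrt_div (by positivity)]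
  nth_rewrite 1 [← Real.sq_sqrt (by positivity : (0 : ℝ) ≤ n + 1)]
  field_simp

lemma sum_sq_sub_mul_eq_ground_state (a φ : ℕ → ℝ) (ha : a 0 = 0) (M : ℕ) :
    ∑ n ∈ range M, (a (n + 1) * φ (n + 1) - a n * φ n) ^ 2 =
      ∑ n ∈ range M, (a (n + 1) * (2 * a (n + 1) - a (n + 2) - a n) * φ (n + 1) ^ 2 +
        a n * a (n + 1) * (φ (n + 1) - φ n) ^ 2) + a M * (a (M + 1) - a M) * φ M ^ 2 := by
  induction M with
  | zero => simp [ha]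
  | succ M ih =>
    rw [sum_range_succ, sum_range_succ, ih]
    ring

noncomputable def harmonicIco (m n : ℕ) : ℝ := ∑ i ∈ Ico m n, 1 / ((i : ℝ) + 1)

lemma harmonicIco_nonneg (m n : ℕ) : 0 ≤ harmonicIco m n :=
  sum_nonneg fun _ _ => by positivity

lemma harmonicIco_pos {m n : ℕ} (h : m < n) : 0 < harmonicIco m n :=
  sum_pos (fun _ _ => by positivity) (nonempty_Ico.2 h)

lemma harmonicIco_of_le {m n : ℕ} (h : n ≤ m) : harmonicIco m n = 0 := by
  simp [harmonicIco, Ico_eq_empty_of_le h]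

lemma harmonicIco_antitone_left {m m' : ℕ} (n : ℕ) (h : m ≤ m') :
    harmonicIco m' n ≤ harmonicIco m n :=
  sum_le_sum_of_subset_of_nonneg (Ico_subset_Ico_left h) fun _ _ _ => by positivity

lemma harmonicIco_eq_one_div_add {m n : ℕ} (h : m < n) :
    harmonicIco m n = 1 / ((m : ℝ) + 1) + harmonicIco (m + 1) n :=
  sum_eq_sum_Ico_succ_bot h _

lemma exists_lt_le_harmonicIco (m : ℕ) (C : ℝ) : ∃ n, m < n ∧ C ≤ harmonicIco m n := by
  obtain ⟨n, hn⟩ := ((Real.tendsto_sum_range_one_div_nat_succ_atTop.eventually_ge_atTop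
    (C + ∑ i ∈ range m, 1 / ((i : ℝ) + 1))).and (eventually_gt_atTop m)).exists
  refine ⟨n, hn.2, ?_⟩
  rw [harmonicIco, sum_Ico_eq_sub _ hn.2.le]
  linarith [hn.1]

-- The discrete analogue of the logarithmic cutoff `1 - log (n / N) / log (M / N)` on `[N, M]`.
noncomputable def harmonicCutoff (N M n : ℕ) : ℝ := min 1 (harmonicIco n M / harmonicIco N M)

section harmonicCutoff

variable {N M : ℕ}

lemma harmonicCutoff_of_le (hNM : N < M) {n : ℕ} (hn : n ≤ N) : harmonicCutoff N M n = 1 :=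
  min_eq_left <| (one_le_div (harmonicIco_pos hNM)).2 (harmonicIco_antitone_left M hn)

lemma harmonicCutoff_of_ge {n : ℕ} (hn : M ≤ n) : harmonicCutoff N M n = 0 := by
  simp [harmonicCutoff, harmonicIco_of_le hn]

lemma harmonicCutoff_of_ge_left {n : ℕ} (hn : N ≤ n) :
    harmonicCutoff N M n = harmonicIco n M / harmonicIco N M :=
  min_eq_right <| div_le_one_of_le₀ (harmonicIco_antitone_left M hn) (harmonicIco_nonneg N M)

lemma harmonicCutoff_succ_sub {n : ℕ} (hN : N ≤ n) (hM : n < M) :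
    harmonicCutoff N M (n + 1) - harmonicCutoff N M n =
      -(1 / ((n : ℝ) + 1)) / harmonicIco N M := by
  rw [harmonicCutoff_of_ge_left hN, harmonicCutoff_of_ge_left (hN.trans n.le_succ),
    harmonicIco_eq_one_div_add hM]
  ring

lemma sum_energy_harmonicCutoff (hNM : N < M) :
    ∑ n ∈ range M, ((n : ℝ) + 1) * (harmonicCutoff N M (n + 1) - harmonicCutoff N M n) ^ 2 =
      1 / harmonicIco N M := by
  have hD := (harmonicIco_pos hNM).ne'
  rw [← sum_range_add_sum_Ico _ hNM.le, sum_eq_zero fun n hn => by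
      rw [harmonicCutoff_of_le hNM (mem_range.1 hn), harmonicCutoff_of_le hNM (mem_range.1 hn).le]
      ring, zero_add]
  calc ∑ n ∈ Ico N M, ((n : ℝ) + 1) * (harmonicCutoff N M (n + 1) - harmonicCutoff N M n) ^ 2
      = ∑ n ∈ Ico N M, 1 / ((n : ℝ) + 1) / harmonicIco N M ^ 2 :=
        sum_congr rfl fun n hn => by
          rw [harmonicCutoff_succ_sub (mem_Ico.1 hn).1 (mem_Ico.1 hn).2]
          field_simp
    _ = 1 / harmonicIco N M := by
      rw [← sum_div, ← harmonicIco]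
      field_simp

end harmonicCutoff

namespace IsHardyWeight

variable {W : ℕ → ℝ}

lemma sum_range_le (h : IsHardyWeight W) {f : ℕ → ℝ} (hf0 : f 0 = 0) {M : ℕ}
    (hfM : ∀ n, M ≤ n → f n = 0) :
    ∑ n ∈ range M, W (n + 1) * f (n + 1) ^ 2 ≤ ∑ n ∈ range M, (f (n + 1) - f n) ^ 2 := by
  have hsupp : (Function.support fun n => (f n : ℂ)).Finite :=
    (range M).finite_toSet.subset fun n hn => by
      by_contra hnM
      exact hn (by simp [hfM n (by simpa using hnM)])
  have hM : ∀ n ∉ range M, M ≤ n + 1 ∧ M ≤ n := fun n hn => by simp at hn; omega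
  have := h (fun n => (f n : ℂ)) (by simp [hf0]) hsupp
  rw [tsum_eq_sum (s := range M) fun n hn => by simp [hfM _ (hM n hn).1],
    tsum_eq_sum (s := range M) fun n hn => by simp [hfM _ (hM n hn).1, hfM _ (hM n hn).2]] at this
  simpa only [← Complex.ofReal_sub, Complex.norm_real, Real.norm_eq_abs, sq_abs] using this

lemma sum_defect_le_energy (h : IsHardyWeight W) {φ : ℕ → ℝ} {M : ℕ}
    (hφ : ∀ n, M ≤ n → φ n = 0) :
    ∑ n ∈ range M, ((n : ℝ) + 1) * (W (n + 1) - optimalHardyWeight (n + 1)) * φ (n + 1) ^ 2 ≤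
      ∑ n ∈ range M, ((n : ℝ) + 1) * (φ (n + 1) - φ n) ^ 2 := by
  have hardy := h.sum_range_le (f := fun n => √(n : ℝ) * φ n) (M := M) (by simp)
    fun n hn => by simp [hφ n hn]
  have hsq (n : ℕ) : √((n : ℝ) + 1) ^ 2 = n + 1 := Real.sq_sqrt (by positivity)
  rw [sum_sq_sub_mul_eq_ground_state (fun n => √(n : ℝ)) φ (by simp), hφ M le_rfl] at hardy
  push_cast at hardy
  simp only [← succ_mul_optimalHardyWeight_succ, mul_pow, hsq, ne_eq, OfNat.ofNat_ne_zero,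
    not_false_eq_true, zero_pow, mul_zero, add_zero, sum_add_distrib] at hardy
  calc ∑ n ∈ range M, ((n : ℝ) + 1) * (W (n + 1) - optimalHardyWeight (n + 1)) * φ (n + 1) ^ 2
      = ∑ n ∈ range M, (W (n + 1) * (((n : ℝ) + 1) * φ (n + 1) ^ 2) -
          ((n : ℝ) + 1) * optimalHardyWeight (n + 1) * φ (n + 1) ^ 2) :=
        sum_congr rfl fun n _ => by ring
    _ ≤ ∑ n ∈ range M, √(n : ℝ) * √((n : ℝ) + 1) * (φ (n + 1) - φ n) ^ 2 := by
        rw [sum_sub_distrib]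
        linarith
    _ ≤ ∑ n ∈ range M, ((n : ℝ) + 1) * (φ (n + 1) - φ n) ^ 2 := by
        gcongr with n
        calc √(n : ℝ) * √((n : ℝ) + 1) ≤ √((n : ℝ) + 1) * √((n : ℝ) + 1) := by gcongr; linarith
          _ = (n : ℝ) + 1 := Real.mul_self_sqrt (by positivity)

lemma succ_mul_sub_optimalHardyWeight_eq_zero (h : IsHardyWeight W)
    (hW : ∀ n : ℕ, optimalHardyWeight (n + 1) ≤ W (n + 1)) (k : ℕ) :
    ((k : ℝ) + 1) * (W (k + 1) - optimalHardyWeight (k + 1)) = 0 := by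
  have hdefect (n : ℕ) : 0 ≤ ((n : ℝ) + 1) * (W (n + 1) - optimalHardyWeight (n + 1)) :=
    mul_nonneg (by positivity) (sub_nonneg.2 (hW n))
  refine le_antisymm (le_of_forall_pos_le_add fun ε hε => ?_) (hdefect k)
  obtain ⟨M, hkM, hε'⟩ := exists_lt_le_harmonicIco (k + 1) (1 / ε)
  have hcut : harmonicCutoff (k + 1) M (k + 1) = 1 := harmonicCutoff_of_le hkM le_rfl
  calc ((k : ℝ) + 1) * (W (k + 1) - optimalHardyWeight (k + 1))
      = ((k : ℝ) + 1) * (W (k + 1) - optimalHardyWeight (k + 1)) *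
          harmonicCutoff (k + 1) M (k + 1) ^ 2 := by rw [hcut]; ring
    _ ≤ ∑ n ∈ range M, ((n : ℝ) + 1) * (W (n + 1) - optimalHardyWeight (n + 1)) *
          harmonicCutoff (k + 1) M (n + 1) ^ 2 :=
        single_le_sum
          (fun n _ => mul_nonneg (hdefect n) (sq_nonneg (harmonicCutoff (k + 1) M (n + 1))))
          (mem_range.2 (by omega : k < M))
    _ ≤ ∑ n ∈ range M, ((n : ℝ) + 1) *
          (harmonicCutoff (k + 1) M (n + 1) - harmonicCutoff (k + 1) M n) ^ 2 :=
        h.sum_defect_le_energy fun _ => harmonicCutoff_of_ge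
    _ = 1 / harmonicIco (k + 1) M := sum_energy_harmonicCutoff hkM
    _ ≤ 0 + ε := by
        rw [zero_add]
        exact (one_div_le (harmonicIco_pos hkM) hε).2 hε'

end IsHardyWeight

/-- If `wtilde n ≥ w n` for all `n ≥ 1`, where `w n = 2 - √((n+1)/n) - √((n-1)/n)`, and the Hardy
inequality with weight `wtilde` holds for all finitely supported complex sequences vanishing at `0`,
then `∑_{n≥1} n (wtilde n - w n) = 0`. -/
theorem sum_n_mul_diff_eq_zero (wtilde : ℕ → ℝ)
    (hge : ∀ n : ℕ, 1 ≤ n →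
      2 - Real.sqrt (((n : ℝ) + 1) / (n : ℝ)) - Real.sqrt (((n : ℝ) - 1) / (n : ℝ)) ≤ wtilde n)
    (hin : ∀ u : ℕ → ℂ, u 0 = 0 → (Function.support u).Finite →
      ∑' n : ℕ, wtilde (n + 1) * ‖u (n + 1)‖ ^ 2 ≤
        ∑' n : ℕ, ‖u (n + 1) - u n‖ ^ 2) :
    ∑' n : ℕ, ((n : ℝ) + 1) * (wtilde (n + 1) - (2 - Real.sqrt (((n : ℝ) + 2) / ((n : ℝ) + 1))
        - Real.sqrt ((n : ℝ) / ((n : ℝ) + 1)))) = 0 := by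
  have hzero := IsHardyWeight.succ_mul_sub_optimalHardyWeight_eq_zero (W := wtilde) hin
    fun n => hge (n + 1) n.succ_pos
  simp_rw [← optimalHardyWeight_succ, hzero, tsum_zero]
end
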